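/- arXiv:2206.10566 — 3 statements merged into one kernel-verified Lean document; each statement's English description precedes it below -/
import Mathlib

section
/- The central label is the mean: for a random variable Y on X with E[Y] ∈ X, the unique minimizer over z ∈ X of E[D_F[Y||z]] is z = E[Y]. -/
open MeasureTheory Set AffineMap
open scoped RealInnerProductSpace

/-!
The linear term of `D_F[y‖z]` in `y` integrates out, so that
`E[D_F[Y‖z]] = E[D_F[Y‖E[Y]]] + D_F[E[Y]‖z]`. The last term is positive for `z ≠ E[Y]`
because a strictly convex function lies strictly above its tangent planes, which in turn is the
one-variable statement along the segment from `z` to `E[Y]`.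
-/

theorem StrictConvexOn.comp_lineMap {E : Type*} [AddCommGroup E] [Module ℝ E] {s : Set E}
    {f : E → ℝ} (hf : StrictConvexOn ℝ s f) {x y : E} (hx : x ∈ s) (hy : y ∈ s) (hxy : x ≠ y) :
    StrictConvexOn ℝ (Icc 0 1) (f ∘ lineMap (k := ℝ) x y) := by
  refine ⟨convex_Icc 0 1, fun a ha b hb hab u v hu hv huv => ?_⟩
  have hmem : ∀ t ∈ Icc (0 : ℝ) 1, lineMap x y t ∈ s := fun t ht => hf.1.lineMap_mem hx hy ht
  change f (lineMap x y (u • a + v • b)) < u • f (lineMap x y a) + v • f (lineMap x y b)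
  rw [Convex.combo_affine_apply huv]
  exact hf.2 (hmem a ha) (hmem b hb) ((lineMap_injective ℝ hxy).ne hab) hu hv huv

theorem StrictConvexOn.lt_sub_of_hasFDerivAt {E : Type*} [NormedAddCommGroup E]
    [NormedSpace ℝ E] {s : Set E} {f : E → ℝ} {f' : E →L[ℝ] ℝ} (hf : StrictConvexOn ℝ s f)
    {x y : E} (hx : x ∈ s) (hy : y ∈ s) (hxy : x ≠ y) (hf' : HasFDerivAt f f' x) :
    f' (y - x) < f y - f x := by
  have hderiv : HasDerivAt (f ∘ lineMap (k := ℝ) x y) (f' (y - x)) 0 := by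
    have hf'0 : HasFDerivAt f f' (lineMap x y (0 : ℝ)) := by rwa [lineMap_apply_zero]
    exact hf'0.comp_hasDerivAt 0 hasDerivAt_lineMap
  simpa [slope_def_field] using
    (hf.comp_lineMap hx hy hxy).lt_slope_of_hasDerivAt (by simp) (by simp) zero_lt_one hderiv

section Bregman

variable {E : Type*} [NormedAddCommGroup E] [InnerProductSpace ℝ E]

def bregmanDiv (F : E → ℝ) (f' : E → E) (y x : E) : ℝ := F y - F x - ⟪f' x, y - x⟫

variable {F : E → ℝ} {f' : E → E} {Ω : Type*} [MeasurableSpace Ω] {μ : Measure Ω} {Y : Ω → E}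

theorem integrable_comp_of_integrable_bregmanDiv [IsFiniteMeasure μ] (hY : Integrable Y μ)
    {z : E} (h : Integrable (fun ω => bregmanDiv F f' (Y ω) z) μ) :
    Integrable (fun ω => F (Y ω)) μ := by
  have hlin : Integrable (fun ω => ⟪f' z, Y ω - z⟫) μ :=
    (hY.sub (integrable_const z)).const_inner (f' z)
  refine ((h.add hlin).add (integrable_const (F z))).congr (ae_of_all _ fun ω => ?_)
  simp only [Pi.add_apply, bregmanDiv]
  ring

variable [CompleteSpace E]

theorem bregmanDiv_pos {s : Set E} (hF : StrictConvexOn ℝ s F) {x y : E} (hx : x ∈ s)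
    (hy : y ∈ s) (hxy : y ≠ x) (hf' : HasGradientAt F (f' x) x) : 0 < bregmanDiv F f' y x := by
  have htangent :=
    hF.lt_sub_of_hasFDerivAt hx hy hxy.symm (hasGradientAt_iff_hasFDerivAt.mp hf')
  rw [InnerProductSpace.toDual_apply_apply] at htangent
  unfold bregmanDiv
  linarith

theorem bregmanDiv_nonneg {s : Set E} (hF : StrictConvexOn ℝ s F) {x y : E} (hx : x ∈ s)
    (hy : y ∈ s) (hf' : HasGradientAt F (f' x) x) : 0 ≤ bregmanDiv F f' y x := by
  rcases eq_or_ne y x with rfl | hxy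
  · simp [bregmanDiv]
  · exact (bregmanDiv_pos hF hx hy hxy hf').le

variable [IsProbabilityMeasure μ]

theorem integral_bregmanDiv (hY : Integrable Y μ) (hFY : Integrable (fun ω => F (Y ω)) μ)
    (z : E) :
    ∫ ω, bregmanDiv F f' (Y ω) z ∂μ = ∫ ω, F (Y ω) ∂μ - F z - ⟪f' z, (∫ ω, Y ω ∂μ) - z⟫ := by
  have hYz : Integrable (fun ω => Y ω - z) μ := hY.sub (integrable_const z)
  have hlin : ∫ ω, ⟪f' z, Y ω - z⟫ ∂μ = ⟪f' z, (∫ ω, Y ω ∂μ) - z⟫ := by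
    rw [integral_inner hYz, integral_sub hY (integrable_const z)]
    simp
  have hFYz : Integrable (fun ω => F (Y ω) - F z) μ := hFY.sub (integrable_const _)
  simp only [bregmanDiv]
  rw [integral_sub hFYz (hYz.const_inner (f' z)), integral_sub hFY (integrable_const _),
    integral_const, hlin]
  simp

theorem integral_bregmanDiv_eq_add (hY : Integrable Y μ)
    (hFY : Integrable (fun ω => F (Y ω)) μ) (z : E) :
    ∫ ω, bregmanDiv F f' (Y ω) z ∂μ =
      ∫ ω, bregmanDiv F f' (Y ω) (∫ ω, Y ω ∂μ) ∂μ + bregmanDiv F f' (∫ ω, Y ω ∂μ) z := by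
  rw [integral_bregmanDiv hY hFY, integral_bregmanDiv hY hFY, bregmanDiv]
  simp only [sub_self, inner_zero_right]
  ring

end Bregman

theorem central_label_is_mean_general {d : ℕ}
    (X : Set (EuclideanSpace ℝ (Fin d)))
    (F : EuclideanSpace ℝ (Fin d) → ℝ)
    (f' : EuclideanSpace ℝ (Fin d) → EuclideanSpace ℝ (Fin d))
    (hF : StrictConvexOn ℝ X F)
    (hdiff : ∀ x ∈ X, HasGradientAt F (f' x) x)
    (D : EuclideanSpace ℝ (Fin d) → EuclideanSpace ℝ (Fin d) → ℝ)
    (hD : ∀ y x, D y x = F y - F x - ((inner ℝ (f' x) (y - x) : ℝ)))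
    {Ω : Type*} [MeasurableSpace Ω] (μ : Measure Ω) [IsProbabilityMeasure μ]
    (Y : Ω → EuclideanSpace ℝ (Fin d))
    (hYint : Integrable Y μ)
    (hEY : (∫ ω, Y ω ∂μ) ∈ X)
    (hint : ∀ z ∈ X, Integrable (fun ω => D (Y ω) z) μ) :
    (∀ z ∈ X, ∫ ω, D (Y ω) (∫ ω', Y ω' ∂μ) ∂μ ≤ ∫ ω, D (Y ω) z ∂μ) ∧
    (∀ z ∈ X, ∫ ω, D (Y ω) z ∂μ = ∫ ω, D (Y ω) (∫ ω', Y ω' ∂μ) ∂μ →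
      z = ∫ ω', Y ω' ∂μ) := by
  obtain rfl : D = bregmanDiv F f' := funext fun y => funext fun x => hD y x
  have hFY := integrable_comp_of_integrable_bregmanDiv hYint (hint _ hEY)
  have hsplit := integral_bregmanDiv_eq_add (f' := f') hYint hFY
  refine ⟨fun z hz => ?_, fun z hz hmin => ?_⟩
  · rw [hsplit z]
    exact le_add_of_nonneg_right (bregmanDiv_nonneg hF hz hEY (hdiff z hz))
  · by_contra hne
    have hpos := bregmanDiv_pos hF hz hEY (Ne.symm hne) (hdiff z hz)
    rw [hsplit z] at hmin
    linarith

/-- The central label is the mean: the unique minimizer over `z ∈ X` of `E[D_F[Y‖z]]`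
is `z = E[Y]`. -/
theorem central_label_is_mean {d : ℕ}
    (X : Set (EuclideanSpace ℝ (Fin d))) (hXc : IsClosed X) (hXv : Convex ℝ X)
    (F : EuclideanSpace ℝ (Fin d) → ℝ)
    (f' : EuclideanSpace ℝ (Fin d) → EuclideanSpace ℝ (Fin d))
    (hF : StrictConvexOn ℝ X F)
    (hdiff : ∀ x ∈ X, HasGradientAt F (f' x) x)
    (D : EuclideanSpace ℝ (Fin d) → EuclideanSpace ℝ (Fin d) → ℝ)
    (hD : ∀ y x, D y x = F y - F x - ((inner ℝ (f' x) (y - x) : ℝ)))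
    {Ω : Type*} [MeasurableSpace Ω] (μ : Measure Ω) [IsProbabilityMeasure μ]
    (Y : Ω → EuclideanSpace ℝ (Fin d))
    (hYm : AEMeasurable Y μ) (hYint : Integrable Y μ)
    (hYX : ∀ᵐ ω ∂μ, Y ω ∈ X) (hEY : (∫ ω, Y ω ∂μ) ∈ X)
    (hint : ∀ z ∈ X, Integrable (fun ω => D (Y ω) z) μ) :
    (∀ z ∈ X, ∫ ω, D (Y ω) (∫ ω', Y ω' ∂μ) ∂μ ≤ ∫ ω, D (Y ω) z ∂μ) ∧
    (∀ z ∈ X, ∫ ω, D (Y ω) z ∂μ = ∫ ω, D (Y ω) (∫ ω', Y ω' ∂μ) ∂μ →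
      z = ∫ ω', Y ω' ∂μ) :=
  central_label_is_mean_general X F f' hF hdiff D hD μ Y hYint hEY hint
end

section
/- Dual decomposition for Bregman divergences: for any z ∈ X, E[D_F[z||X]] = D_F[z || ℰX] + E[D_F[ℰX || X]], where ℰX = ∇F^{-1}(E ∇F(X)) is the dual mean. -/
open MeasureTheory

open scoped RealInnerProductSpace

section Bregman

variable {E : Type*} [NormedAddCommGroup E] [InnerProductSpace ℝ E]
  {F : E → ℝ} {f' : E → E} {D : E → E → ℝ}

theorem bregman_three_point (hD : ∀ y x, D y x = F y - F x - ⟪f' x, y - x⟫) (z y x : E) :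
    D z x = D z y + D y x + ⟪z - y, f' y - f' x⟫ := by
  simp only [hD, inner_sub_right, real_inner_comm (f' x), real_inner_comm (f' y)]
  ring

variable [CompleteSpace E] {Ω : Type*} [MeasurableSpace Ω] {μ : Measure Ω}
  [IsProbabilityMeasure μ] {X : Ω → E}

theorem integral_bregman_eq_add_integral_of_gradient_eq_integral
    (hD : ∀ y x, D y x = F y - F x - ⟪f' x, y - x⟫)
    (hf'X : Integrable (fun ω => f' (X ω)) μ) {y : E} (hy : f' y = ∫ ω, f' (X ω) ∂μ)
    (hDy : Integrable (fun ω => D y (X ω)) μ) (z : E) :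
    ∫ ω, D z (X ω) ∂μ = D z y + ∫ ω, D y (X ω) ∂μ := by
  have hcross : Integrable (fun ω => f' y - f' (X ω)) μ := (integrable_const _).sub hf'X
  have hcross_zero : ∫ ω, ⟪z - y, f' y - f' (X ω)⟫ ∂μ = 0 := by
    rw [integral_inner hcross, integral_sub (integrable_const _) hf'X, integral_const,
      probReal_univ, one_smul, hy, sub_self, inner_zero_right]
  have hmain : Integrable (fun ω => D z y + D y (X ω)) μ := (integrable_const _).add hDy
  rw [integral_congr_ae (.of_forall fun ω => bregman_three_point hD z y (X ω)),
    integral_add hmain (hcross.const_inner _), hcross_zero,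
    integral_add (integrable_const _) hDy, integral_const, probReal_univ, one_smul, add_zero]

end Bregman

theorem bregman_dual_decomposition_general {d : ℕ}
    (S : Set (EuclideanSpace ℝ (Fin d)))
    (F : EuclideanSpace ℝ (Fin d) → ℝ)
    (f' : EuclideanSpace ℝ (Fin d) → EuclideanSpace ℝ (Fin d))
    (D : EuclideanSpace ℝ (Fin d) → EuclideanSpace ℝ (Fin d) → ℝ)
    (hD : ∀ y x, D y x = F y - F x - ((inner ℝ (f' x) (y - x) : ℝ)))
    {Ω : Type*} [MeasurableSpace Ω] (μ : Measure Ω) [IsProbabilityMeasure μ]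
    (X : Ω → EuclideanSpace ℝ (Fin d))
    (hdint : Integrable (fun ω => f' (X ω)) μ)
    (EX : EuclideanSpace ℝ (Fin d))
    (hrange : f' EX = ∫ ω, f' (X ω) ∂μ) (hmem : EX ∈ S)
    (hint : ∀ z ∈ S, Integrable (fun ω => D z (X ω)) μ) :
    ∀ z ∈ S, ∫ ω, D z (X ω) ∂μ = D z EX + ∫ ω, D EX (X ω) ∂μ := fun z _ =>
  integral_bregman_eq_add_integral_of_gradient_eq_integral hD hdint hrange (hint EX hmem) z

/-- Dual decomposition for Bregman divergences:
`E[D_F[z‖X]] = D_F[z ‖ ℰX] + E[D_F[ℰX ‖ X]]` where `ℰX = ∇F⁻¹(E ∇F(X))`. -/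
theorem bregman_dual_decomposition {d : ℕ}
    (S : Set (EuclideanSpace ℝ (Fin d))) (hSc : IsClosed S) (hSv : Convex ℝ S)
    (F : EuclideanSpace ℝ (Fin d) → ℝ)
    (f' g : EuclideanSpace ℝ (Fin d) → EuclideanSpace ℝ (Fin d))
    (hF : StrictConvexOn ℝ S F)
    (hdiff : ∀ x ∈ S, HasGradientAt F (f' x) x)
    (hg : ∀ x ∈ S, g (f' x) = x)
    (D : EuclideanSpace ℝ (Fin d) → EuclideanSpace ℝ (Fin d) → ℝ)
    (hD : ∀ y x, D y x = F y - F x - ((inner ℝ (f' x) (y - x) : ℝ)))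
    {Ω : Type*} [MeasurableSpace Ω] (μ : Measure Ω) [IsProbabilityMeasure μ]
    (X : Ω → EuclideanSpace ℝ (Fin d))
    (hXm : AEMeasurable X μ) (hXS : ∀ᵐ ω ∂μ, X ω ∈ S)
    (hXint : Integrable X μ)
    (hdint : Integrable (fun ω => f' (X ω)) μ)
    (hFint : Integrable (fun ω => F (X ω)) μ)
    (EX : EuclideanSpace ℝ (Fin d))
    (hEX : EX = g (∫ ω, f' (X ω) ∂μ))
    (hrange : f' EX = ∫ ω, f' (X ω) ∂μ) (hmem : EX ∈ S)
    (hint : ∀ z ∈ S, Integrable (fun ω => D z (X ω)) μ) :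
    ∀ z ∈ S, ∫ ω, D z (X ω) ∂μ = D z EX + ∫ ω, D EX (X ω) ∂μ :=
  bregman_dual_decomposition_general S F f' D hD μ X hdint EX hrange hmem hint
end

section
/- Primal ensembling does not preserve bias for the KL divergence: there exist a distribution over probability vectors X ∈ Δ^1 ⊂ ℝ^2, an n ≥ 2, and a label y ∈ {0,1} such that, with X̂ = (1/n)∑_{i=1}^n X_i for i.i.d. X_i ~ X, KL[y || ℰX̂] < KL[y || ℰX] while KL[1−y || ℰX̂] > KL[1−y || ℰX], where ℰW = softmax(E log W). -/
/-!
For a one-hot label `y` on two outcomes, `KL[y ‖ softmax v] = log (1 + exp (v (1-y) - v y))`,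
so both biases are strictly monotone functions of the expected log-odds
`E log W₁ - E log W₀` of the dual mean, in opposite directions. Hence it suffices to find an
ensemble that strictly lowers the expected log-odds. Take `X = (1/2, 1/2)` or `(1/4, 3/4)` with
probability `1/2` each, and `n = 2`: the expected log-odds drops from `(log 3) / 2` for `X` to
`(2 log (5/3) + log 3) / 4` for `X̂`, because `(5/3)² < 3`.
-/

open MeasureTheory ProbabilityTheory
open scoped BigOperators

open Real

lemma sum_onehot_mul_log_div {ι : Type*} [Fintype ι] [DecidableEq ι] (q : ι → ℝ) (y : ι) :
    ∑ k, (if k = y then (1 : ℝ) else 0) * log ((if k = y then 1 else 0) / q k) = -log (q y) := by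
  simp [← log_inv]

lemma neg_log_softmax_fin_two (v : Fin 2 → ℝ) (y : Fin 2) :
    -log (exp (v y) / ∑ j, exp (v j)) = log (1 + exp (v (1 - y) - v y)) := by
  have hsum : ∑ j, exp (v j) = exp (v y) + exp (v (1 - y)) := by
    fin_cases y <;> simp [Fin.sum_univ_two, add_comm]
  rw [← log_inv, inv_div, hsum, add_div, div_self (exp_pos _).ne', exp_sub]

lemma sum_onehot_mul_log_div_dualMean {Ω : Type*} [MeasurableSpace Ω] (μ : Measure Ω)
    (W : Ω → Fin 2 → ℝ) (y : Fin 2) :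
    ∑ k, (if k = y then (1 : ℝ) else 0) * log ((if k = y then 1 else 0) /
        (exp (∫ ω, log (W ω k) ∂μ) / ∑ j, exp (∫ ω, log (W ω j) ∂μ))) =
      log (1 + exp (∫ ω, log (W ω (1 - y)) ∂μ - ∫ ω, log (W ω y) ∂μ)) := by
  rw [sum_onehot_mul_log_div, neg_log_softmax_fin_two fun k => ∫ ω, log (W ω k) ∂μ]

lemma strictMono_log_one_add_exp : StrictMono fun t : ℝ => log (1 + exp t) := fun _ _ h =>
  log_lt_log (by positivity) (by simpa using exp_lt_exp.2 h)

lemma identDistrib_comp_eval {ι α β : Type*} [Fintype ι] [MeasurableSpace α] [MeasurableSpace β]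
    (ν : Measure α) [IsProbabilityMeasure ν] {g : α → β} (hg : Measurable g) (i j : ι) :
    IdentDistrib (fun ω => g (ω i)) (fun ω => g (ω j))
      (Measure.pi fun _ => ν) (Measure.pi fun _ => ν) :=
  IdentDistrib.comp ⟨(measurable_pi_apply i).aemeasurable, (measurable_pi_apply j).aemeasurable,
    by rw [(measurePreserving_eval _ i).map_eq, (measurePreserving_eval _ j).map_eq]⟩ hg

lemma integral_pi_fin_two {α : Type*} [MeasurableSpace α] (ν : Measure α) [SigmaFinite ν]
    {g : (Fin 2 → α) → ℝ} (hg : Integrable g (Measure.pi fun _ => ν)) :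
    ∫ ω, g ω ∂(Measure.pi fun _ => ν) = ∫ a, ∫ b, g ![a, b] ∂ν ∂ν := by
  rw [← (measurePreserving_finTwoArrow ν).symm.integral_comp', integral_prod]
  · rfl
  · exact (measurePreserving_finTwoArrow ν).symm.integrable_comp_emb
      (MeasurableEquiv.measurableEmbedding _) |>.2 hg

noncomputable def fairCoin : Measure Bool := (PMF.uniformOfFintype Bool).toMeasure

instance : IsProbabilityMeasure fairCoin := by unfold fairCoin; infer_instance

lemma integral_fairCoin (g : Bool → ℝ) : ∫ b, g b ∂fairCoin = (g true + g false) / 2 := by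
  simp only [fairCoin, PMF.integral_eq_sum, Fintype.sum_bool, PMF.uniformOfFintype_apply,
    Fintype.card_bool, smul_eq_mul]
  norm_num
  ring

lemma integral_pi_fairCoin (g : (Fin 2 → Bool) → ℝ) :
    ∫ ω, g ω ∂(Measure.pi fun _ => fairCoin) =
      (g ![true, true] + g ![true, false] + g ![false, true] + g ![false, false]) / 4 := by
  rw [integral_pi_fin_two _ .of_finite]
  simp only [integral_fairCoin]
  ring

noncomputable def forecast : Bool → Fin 2 → ℝ
  | true => ![1 / 2, 1 / 2]
  | false => ![1 / 4, 3 / 4]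

lemma forecast_pos (b : Bool) (k : Fin 2) : 0 < forecast b k := by
  fin_cases k <;> cases b <;> norm_num [forecast]

lemma sum_forecast (b : Bool) : ∑ k, forecast b k = 1 := by
  cases b <;> norm_num [forecast, Fin.sum_univ_two]

noncomputable def logOdds {Ω : Type*} [MeasurableSpace Ω] (μ : Measure Ω) (W : Ω → Fin 2 → ℝ) :
    ℝ :=
  ∫ ω, log (W ω 1) ∂μ - ∫ ω, log (W ω 0) ∂μ

lemma two_mul_log_five_div_three_lt_log_three : 2 * log (5 / 3) < log 3 := by
  rw [← log_rpow (by norm_num)]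
  exact log_lt_log (by norm_num) (by norm_num)

lemma logOdds_average_forecast_lt :
    logOdds (Measure.pi fun _ => fairCoin)
        (fun ω : Fin 2 → Bool => (2 : ℝ)⁻¹ • ∑ i : Fin 2, forecast (ω i)) <
      logOdds (Measure.pi fun _ => fairCoin) (fun ω : Fin 2 → Bool => forecast (ω 0)) := by
  simp only [logOdds, integral_pi_fairCoin, Fin.sum_univ_two]
  norm_num [forecast]
  have h58 : log (5 / 8) = log (5 / 3) + log (3 / 8) := by rw [← log_mul] <;> norm_num
  have h34 : log (3 / 4) = log 3 + log (1 / 4) := by rw [← log_mul] <;> norm_num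
  linarith [two_mul_log_five_div_three_lt_log_three]

/-- Primal ensembling does not preserve the bias for the KL divergence: there exist a
distribution over probability vectors on two outcomes, an `n ≥ 2`, and a one-hot label
`y ∈ {0,1}` such that, with `X̂ = (1/n)∑ Xᵢ` for i.i.d. `Xᵢ ~ X`, the bias
`KL[y ‖ ℰ·]` strictly decreases while `KL[1-y ‖ ℰ·]` strictly increases, where
`ℰW = softmax(E log W)` is the dual (geometric) mean. -/
theorem primal_ensembling_does_not_preserve_bias :
    ∃ (Ω : Type) (_ : MeasurableSpace Ω) (μ : Measure Ω) (_ : IsProbabilityMeasure μ)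
      (n : ℕ) (X : Ω → Fin 2 → ℝ) (Xs : Fin n → Ω → Fin 2 → ℝ) (y : Fin 2),
      2 ≤ n ∧
      (∀ ω k, 0 < X ω k) ∧ (∀ ω, ∑ k, X ω k = 1) ∧
      (∀ i, Measurable (Xs i)) ∧
      iIndepFun Xs μ ∧
      (∀ i, IdentDistrib (Xs i) X μ μ) ∧
      (let KL : (Fin 2 → ℝ) → (Fin 2 → ℝ) → ℝ :=
        fun p q => ∑ k, p k * Real.log (p k / q k)
      let dualMean : (Ω → Fin 2 → ℝ) → (Fin 2 → ℝ) :=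
        fun W k => Real.exp (∫ ω, Real.log (W ω k) ∂μ)
                    / ∑ j, Real.exp (∫ ω, Real.log (W ω j) ∂μ)
      let Xhat : Ω → Fin 2 → ℝ := fun ω => (n : ℝ)⁻¹ • ∑ i, Xs i ω
      let onehot : Fin 2 → Fin 2 → ℝ := fun a k => if k = a then 1 else 0
      KL (onehot y) (dualMean Xhat) < KL (onehot y) (dualMean X) ∧
        KL (onehot (1 - y)) (dualMean Xhat) > KL (onehot (1 - y)) (dualMean X)) := by
  refine ⟨Fin 2 → Bool, inferInstance, Measure.pi fun _ => fairCoin, inferInstance, 2,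
    fun ω => forecast (ω 0), fun i ω => forecast (ω i), 0, le_rfl,
    fun ω => forecast_pos (ω 0), fun ω => sum_forecast (ω 0), fun _ => measurable_of_countable _,
    iIndepFun_pi fun _ => (measurable_of_countable forecast).aemeasurable,
    fun i => identDistrib_comp_eval _ (measurable_of_countable forecast) i 0, ?_⟩
  intro KL dualMean Xhat onehot
  simp only [KL, dualMean, onehot, sum_onehot_mul_log_div_dualMean, sub_zero, sub_self]
  have h : logOdds _ Xhat < logOdds _ fun ω : Fin 2 → Bool => forecast (ω 0) :=
    logOdds_average_forecast_lt
  unfold logOdds at h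
  exact ⟨strictMono_log_one_add_exp h, strictMono_log_one_add_exp (by linarith)⟩
end
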